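/- Let G/K be a generalized flag manifold whose isotropy representation 𝔪 is irreducible as an Ad(K)-module (s = 1), and let G/K₁ be the corresponding M-space. If 𝔪 is reducible as an Ad(K₁)-module, then (G/K₁, g) is a g.o. space if and only if g is the standard metric. -/

import Mathlib

open Module

/-- A submodule `W` of a Lie algebra is invariant under the (infinitesimal) adjoint action
of the Lie subalgebra `k`.  For a connected Lie group this corresponds to `Ad(K)`-invariance. -/
def AdInvariant {𝔤 : Type*} [LieRing 𝔤] [LieAlgebra ℝ 𝔤]
    (k : LieSubalgebra ℝ 𝔤) (W : Submodule ℝ 𝔤) : Prop :=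
  ∀ x ∈ k, ∀ w ∈ W, ⁅x, w⁆ ∈ W

/-- `W` is a nonzero irreducible module for the adjoint action of `k`
(i.e. an irreducible `Ad(K)`-module). -/
def AdIrreducible {𝔤 : Type*} [LieRing 𝔤] [LieAlgebra ℝ 𝔤]
    (k : LieSubalgebra ℝ 𝔤) (W : Submodule ℝ 𝔤) : Prop :=
  AdInvariant k W ∧ W ≠ ⊥ ∧
    ∀ U : Submodule ℝ 𝔤, U ≤ W → AdInvariant k U → U = ⊥ ∨ U = W

/-- `W` is a reducible `Ad(K)`-module: invariant, with a proper nonzero invariant submodule. -/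
def AdReducible {𝔤 : Type*} [LieRing 𝔤] [LieAlgebra ℝ 𝔤]
    (k : LieSubalgebra ℝ 𝔤) (W : Submodule ℝ 𝔤) : Prop :=
  AdInvariant k W ∧ ∃ U : Submodule ℝ 𝔤, U ≤ W ∧ AdInvariant k U ∧ U ≠ ⊥ ∧ U ≠ W

/-- Equivalence of two `Ad(K)`-modules `U` and `V`: an injective intertwining linear map
carrying `U` onto `V`. -/
def AdEquiv {𝔤 : Type*} [LieRing 𝔤] [LieAlgebra ℝ 𝔤]
    (k : LieSubalgebra ℝ 𝔤) (U V : Submodule ℝ 𝔤) : Prop :=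
  ∃ f : 𝔤 →ₗ[ℝ] 𝔤, Submodule.map f U = V ∧ (∀ u ∈ U, f u = 0 → u = 0) ∧
    ∀ x ∈ k, ∀ u ∈ U, f ⁅x, u⁆ = ⁅x, f u⁆

/-- The g.o. property of the `G`-invariant metric with associated operator `Λ` on the
homogeneous space with isotropy algebra `k` and tangent space `n`: every geodesic through
the origin is homogeneous, i.e. (by the standard criterion) for every `x ∈ n` there is
`a ∈ k` such that `⁅a + x, Λ x⁆ ∈ k`. -/
def IsGOMetric {𝔤 : Type*} [LieRing 𝔤] [LieAlgebra ℝ 𝔤]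
    (k : LieSubalgebra ℝ 𝔤) (n : Submodule ℝ 𝔤) (Λ : 𝔤 →ₗ[ℝ] 𝔤) : Prop :=
  ∀ x ∈ n, ∃ a ∈ k, ⁅a + x, Λ x⁆ ∈ k.toSubmodule

/-!
Write `B = -killingForm`, an inner product on `𝔤`. Since `𝔪` is `Ad(K)`-irreducible but
`Ad(K₁)`-reducible, `𝔨₁ ≠ 𝔨`, so some `z ≠ 0` in `𝔨` is `B`-orthogonal to `𝔨₁`. Pairing the
g.o. condition `⁅a + v, Λ v⁆ ∈ 𝔨₁` with `z` kills `B(z, ⁅a, Λ v⁆)` and leaves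
`B(z, ⁅v, Λ v⁆) = 0` on `𝔫`; polarizing, `Λ` commutes with `ad z`, hence with `ad s` for the
nonzero `𝔰`-component `s` of `z`. By Schur's lemma each `ad t ∘ ad s` (`t ∈ 𝔰`) is a scalar on
`𝔪`, so `𝔰` acts on `𝔪` through multiples of the injective `ad s`. Thus `Λ` preserves `𝔰` and
`𝔪`, commutes with `ad 𝔨` on `𝔪`, and is a scalar `μ > 0` there. Finally the g.o. condition at
`s + u`, with `u` in a proper `Ad(K₁)`-submodule `U` of `𝔪`, shows that `ad (Λ s - μ s)`
preserves `U`; if `Λ s ≠ μ s`, all of `ad 𝔰`, hence `ad 𝔨`, would preserve `U`.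
-/

section NegativeDefiniteKilling

variable {𝔤 : Type*} [LieRing 𝔤] [LieAlgebra ℝ 𝔤]

lemma eq_zero_of_killingForm_self_eq_zero
    (hB : ∀ x : 𝔤, x ≠ 0 → killingForm ℝ 𝔤 x x < 0) {x : 𝔤}
    (hx : killingForm ℝ 𝔤 x x = 0) : x = 0 := by
  by_contra h
  exact (hB x h).ne hx

lemma eq_zero_of_forall_lie_eq_zero [FiniteDimensional ℝ 𝔤]
    (hB : ∀ x : 𝔤, x ≠ 0 → killingForm ℝ 𝔤 x x < 0) {s : 𝔤}
    (hs : ∀ y : 𝔤, ⁅s, y⁆ = 0) : s = 0 := by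
  have had : LieModule.toEnd ℝ 𝔤 𝔤 s = 0 := LinearMap.ext hs
  refine eq_zero_of_killingForm_self_eq_zero hB ?_
  rw [killingForm, LieModule.traceForm_apply_apply, had, LinearMap.zero_comp, map_zero]

noncomputable abbrev negKillingCore (hB : ∀ x : 𝔤, x ≠ 0 → killingForm ℝ 𝔤 x x < 0) :
    InnerProductSpace.Core ℝ 𝔤 where
  inner x y := -killingForm ℝ 𝔤 x y
  conj_inner_symm x y := by simp [LieModule.traceForm_comm ℝ 𝔤 𝔤 x y]
  re_inner_nonneg x := by
    rcases eq_or_ne x 0 with rfl | hx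
    · simp
    · simpa using (hB x hx).le
  definite x hx := eq_zero_of_killingForm_self_eq_zero hB (neg_eq_zero.mp hx)
  add_left x y z := by simp only [map_add, LinearMap.add_apply, neg_add]
  smul_left x y r := by simp

lemma exists_eigenvector_of_killingForm_symm [FiniteDimensional ℝ 𝔤]
    (hB : ∀ x : 𝔤, x ≠ 0 → killingForm ℝ 𝔤 x x < 0) {W : Submodule ℝ 𝔤} (hW : W ≠ ⊥)
    {T : 𝔤 →ₗ[ℝ] 𝔤} (hT : ∀ w ∈ W, T w ∈ W)
    (hsym : ∀ w ∈ W, ∀ w' ∈ W, killingForm ℝ 𝔤 (T w) w' = killingForm ℝ 𝔤 w (T w')) :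
    ∃ c : ℝ, ∃ v ∈ W, v ≠ 0 ∧ T v = c • v := by
  let _ : NormedAddCommGroup 𝔤 := (negKillingCore hB).toNormedAddCommGroup
  let _ : InnerProductSpace ℝ 𝔤 := InnerProductSpace.ofCore (negKillingCore hB).toCore
  have : Nontrivial W := Submodule.nontrivial_iff_ne_bot.mpr hW
  have hTW : (T.restrict hT).IsSymmetric := fun w w' => by
    change -killingForm ℝ 𝔤 (T w) w' = -killingForm ℝ 𝔤 w (T w')
    rw [hsym w w.2 w' w'.2]
  obtain ⟨v, hv, hv0⟩ := hTW.hasEigenvalue_iSup_of_finiteDimensional.exists_hasEigenvector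
  exact ⟨_, v, v.2, by simpa using hv0, congrArg Subtype.val (Module.End.mem_eigenspace_iff.mp hv)⟩

lemma exists_ne_zero_killingForm_eq_zero_of_lt [FiniteDimensional ℝ 𝔤]
    (hB : ∀ x : 𝔤, x ≠ 0 → killingForm ℝ 𝔤 x x < 0) {P Q : Submodule ℝ 𝔤} (hPQ : P < Q) :
    ∃ z ∈ Q, z ≠ 0 ∧ ∀ p ∈ P, killingForm ℝ 𝔤 z p = 0 := by
  let _ : NormedAddCommGroup 𝔤 := (negKillingCore hB).toNormedAddCommGroup
  let _ : InnerProductSpace ℝ 𝔤 := InnerProductSpace.ofCore (negKillingCore hB).toCore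
  have hsup := Submodule.sup_orthogonal_inf_of_hasOrthogonalProjection hPQ.le
  obtain ⟨z, ⟨hzP, hzQ⟩, hz0⟩ : ∃ z ∈ Pᗮ ⊓ Q, z ≠ 0 := by
    refine Submodule.exists_mem_ne_zero_of_ne_bot fun h => hPQ.ne ?_
    rwa [h, sup_bot_eq] at hsup
  refine ⟨z, hzQ, hz0, fun p hp => ?_⟩
  have : -killingForm ℝ 𝔤 p z = 0 := (Submodule.mem_orthogonal P z).mp hzP p hp
  rw [LieModule.traceForm_comm]
  linarith

lemma map_lie_eq_lie_map_of_killingForm_lie_map_self_eq_zero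
    (hB : ∀ x : 𝔤, x ≠ 0 → killingForm ℝ 𝔤 x x < 0) {N : Submodule ℝ 𝔤} {Λ : 𝔤 →ₗ[ℝ] 𝔤}
    (hΛ : ∀ v ∈ N, Λ v ∈ N)
    (hsym : ∀ v ∈ N, ∀ w ∈ N, killingForm ℝ 𝔤 (Λ v) w = killingForm ℝ 𝔤 v (Λ w))
    {z : 𝔤} (hz : ∀ v ∈ N, ⁅z, v⁆ ∈ N) (h : ∀ v ∈ N, killingForm ℝ 𝔤 z ⁅v, Λ v⁆ = 0) :
    ∀ v ∈ N, Λ ⁅z, v⁆ = ⁅z, Λ v⁆ := by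
  intro v hv
  have hpol : ∀ w ∈ N, killingForm ℝ 𝔤 z ⁅v, Λ w⁆ + killingForm ℝ 𝔤 z ⁅w, Λ v⁆ = 0 := by
    intro w hw
    have hvw := h (v + w) (N.add_mem hv hw)
    simp only [map_add, add_lie, lie_add] at hvw
    linarith [h v hv, h w hw]
  have horth : ∀ w ∈ N, killingForm ℝ 𝔤 (Λ ⁅z, v⁆ - ⁅z, Λ v⁆) w = 0 := by
    intro w hw
    have e1 : killingForm ℝ 𝔤 (Λ ⁅z, v⁆) w = killingForm ℝ 𝔤 z ⁅v, Λ w⁆ := by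
      rw [hsym _ (hz v hv) w hw, LieModule.traceForm_apply_lie_apply]
    have e2 : killingForm ℝ 𝔤 ⁅z, Λ v⁆ w = -killingForm ℝ 𝔤 z ⁅w, Λ v⁆ := by
      rw [LieModule.traceForm_apply_lie_apply, ← lie_skew, map_neg]
    rw [map_sub, LinearMap.sub_apply, e1, e2, sub_neg_eq_add, hpol w hw]
  exact sub_eq_zero.mp <| eq_zero_of_killingForm_self_eq_zero hB <|
    horth _ (N.sub_mem (hΛ _ (hz v hv)) (hz _ (hΛ v hv)))

lemma map_mem_of_map_mem_of_killingForm_eq_zero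
    (hB : ∀ x : 𝔤, x ≠ 0 → killingForm ℝ 𝔤 x x < 0) {P W : Submodule ℝ 𝔤}
    (horth : ∀ p ∈ P, ∀ w ∈ W, killingForm ℝ 𝔤 p w = 0) {Λ : 𝔤 →ₗ[ℝ] 𝔤}
    (hΛ : ∀ v ∈ P ⊔ W, Λ v ∈ P ⊔ W)
    (hsym : ∀ v ∈ P ⊔ W, ∀ w ∈ P ⊔ W, killingForm ℝ 𝔤 (Λ v) w = killingForm ℝ 𝔤 v (Λ w))
    (hP : ∀ p ∈ P, Λ p ∈ P) : ∀ w ∈ W, Λ w ∈ W := by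
  intro w hw
  obtain ⟨p, hp, w', hw', hpw⟩ := Submodule.mem_sup.mp (hΛ w (Submodule.mem_sup_right hw))
  have hpp : killingForm ℝ 𝔤 p p = 0 := by
    have h := hsym w (Submodule.mem_sup_right hw) p (Submodule.mem_sup_left hp)
    rw [LieModule.traceForm_comm ℝ 𝔤 𝔤 w, horth _ (hP p hp) w hw, ← hpw, map_add,
      LinearMap.add_apply, LieModule.traceForm_comm ℝ 𝔤 𝔤 w', horth p hp w' hw', add_zero] at h
    exact h
  rw [← hpw, eq_zero_of_killingForm_self_eq_zero hB hpp, zero_add]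
  exact hw'

end NegativeDefiniteKilling

lemma lie_lie_comm_of_lie_eq_zero {L : Type*} [LieRing L] {x y : L} (h : ⁅x, y⁆ = 0) (z : L) :
    ⁅x, ⁅y, z⁆⁆ = ⁅y, ⁅x, z⁆⁆ := by
  rw [leibniz_lie, h, zero_lie, zero_add]

section AdIrreducible

variable {𝔤 : Type*} [LieRing 𝔤] [LieAlgebra ℝ 𝔤] {𝔨 : LieSubalgebra ℝ 𝔤} {W : Submodule ℝ 𝔤}

lemma AdIrreducible.eq_smul_of_eigenvector (hW : AdIrreducible 𝔨 W) {T : 𝔤 →ₗ[ℝ] 𝔤}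
    (hcomm : ∀ k ∈ 𝔨, ∀ w ∈ W, T ⁅k, w⁆ = ⁅k, T w⁆) {c : ℝ} {v : 𝔤} (hv : v ∈ W)
    (hv0 : v ≠ 0) (hTv : T v = c • v) : ∀ w ∈ W, T w = c • w := by
  let E := W ⊓ LinearMap.ker (T - c • LinearMap.id)
  have mem_E {w : 𝔤} : w ∈ E ↔ w ∈ W ∧ T w = c • w := by
    simp [E, sub_eq_zero]
  have hE : AdInvariant 𝔨 E := fun k hk w hw => by
    rw [mem_E] at hw ⊢
    exact ⟨hW.1 k hk w hw.1, by rw [hcomm k hk w hw.1, hw.2, lie_smul]⟩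
  have hEW : E = W := (hW.2.2 E inf_le_left hE).resolve_left fun h => hv0 <| by
    simpa [h] using mem_E.mpr ⟨hv, hTv⟩
  intro w hw
  exact (mem_E.mp (hEW ▸ hw)).2

theorem AdIrreducible.exists_eq_smul [FiniteDimensional ℝ 𝔤]
    (hB : ∀ x : 𝔤, x ≠ 0 → killingForm ℝ 𝔤 x x < 0) (hW : AdIrreducible 𝔨 W)
    {T : 𝔤 →ₗ[ℝ] 𝔤} (hT : ∀ w ∈ W, T w ∈ W)
    (hsym : ∀ w ∈ W, ∀ w' ∈ W, killingForm ℝ 𝔤 (T w) w' = killingForm ℝ 𝔤 w (T w'))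
    (hcomm : ∀ k ∈ 𝔨, ∀ w ∈ W, T ⁅k, w⁆ = ⁅k, T w⁆) :
    ∃ c : ℝ, ∀ w ∈ W, T w = c • w := by
  obtain ⟨c, v, hv, hv0, hTv⟩ := exists_eigenvector_of_killingForm_symm hB hW.2.1 hT hsym
  exact ⟨c, hW.eq_smul_of_eigenvector hcomm hv hv0 hTv⟩

variable [FiniteDimensional ℝ 𝔤]

lemma AdIrreducible.exists_lie_lie_eq_smul_of_central
    (hB : ∀ x : 𝔤, x ≠ 0 → killingForm ℝ 𝔤 x x < 0) (hW : AdIrreducible 𝔨 W) {s t : 𝔤}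
    (hs : s ∈ 𝔨) (hsc : ∀ k ∈ 𝔨, ⁅s, k⁆ = 0) (ht : t ∈ 𝔨) (htc : ∀ k ∈ 𝔨, ⁅t, k⁆ = 0) :
    ∃ c : ℝ, ∀ w ∈ W, ⁅s, ⁅t, w⁆⁆ = c • w := by
  refine hW.exists_eq_smul hB (T := LieAlgebra.ad ℝ 𝔤 s ∘ₗ LieAlgebra.ad ℝ 𝔤 t)
    (fun w hw => hW.1 s hs _ (hW.1 t ht w hw)) (fun w _ w' _ => ?_) (fun k hk w _ => ?_)
  · simp only [LinearMap.comp_apply, LieAlgebra.ad_apply]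
    rw [LieModule.traceForm_apply_lie_apply', LieModule.traceForm_apply_lie_apply', neg_neg,
      lie_lie_comm_of_lie_eq_zero (hsc t ht)]
  · simp only [LinearMap.comp_apply, LieAlgebra.ad_apply]
    rw [lie_lie_comm_of_lie_eq_zero (htc k hk), lie_lie_comm_of_lie_eq_zero (hsc k hk)]

lemma AdIrreducible.eq_zero_of_lie_eq_zero_of_central
    (hB : ∀ x : 𝔤, x ≠ 0 → killingForm ℝ 𝔤 x x < 0) (hW : AdIrreducible 𝔨 W)
    (hsup : 𝔨.toSubmodule ⊔ W = ⊤) {s : 𝔤} (hs : s ∈ 𝔨) (hsc : ∀ k ∈ 𝔨, ⁅s, k⁆ = 0)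
    (hs0 : s ≠ 0) {w : 𝔤} (hw : w ∈ W) (hsw : ⁅s, w⁆ = 0) : w = 0 := by
  obtain ⟨c, hc⟩ := hW.exists_lie_lie_eq_smul_of_central hB hs hsc hs hsc
  -- if `(ad s)² = 0` on `W`, skewness kills `ad s` on `W`, hence on `𝔨 ⊔ W = 𝔤`
  have hc0 : c ≠ 0 := by
    rintro rfl
    refine hs0 (eq_zero_of_forall_lie_eq_zero hB fun y => ?_)
    obtain ⟨k, hk, m, hm, rfl⟩ := Submodule.mem_sup.mp (hsup ▸ Submodule.mem_top : y ∈ _)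
    have hsm : ⁅s, m⁆ = 0 := eq_zero_of_killingForm_self_eq_zero hB <| by
      rw [LieModule.traceForm_apply_lie_apply', hc m hm, zero_smul, map_zero, neg_zero]
    rw [lie_add, hsc k hk, hsm, add_zero]
  have hcw : c • w = 0 := by rw [← hc w hw, hsw, lie_zero]
  exact (smul_eq_zero.mp hcw).resolve_left hc0

lemma AdIrreducible.exists_lie_eq_smul_lie_of_central
    (hB : ∀ x : 𝔤, x ≠ 0 → killingForm ℝ 𝔤 x x < 0) (hW : AdIrreducible 𝔨 W)
    (hsup : 𝔨.toSubmodule ⊔ W = ⊤) {s t : 𝔤} (hs : s ∈ 𝔨) (hsc : ∀ k ∈ 𝔨, ⁅s, k⁆ = 0)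
    (hs0 : s ≠ 0) (ht : t ∈ 𝔨) (htc : ∀ k ∈ 𝔨, ⁅t, k⁆ = 0) :
    ∃ r : ℝ, ∀ w ∈ W, ⁅t, w⁆ = r • ⁅s, w⁆ := by
  have inj {w : 𝔤} (hw : w ∈ W) (hsw : ⁅s, w⁆ = 0) : w = 0 :=
    hW.eq_zero_of_lie_eq_zero_of_central hB hsup hs hsc hs0 hw hsw
  obtain ⟨c, hc⟩ := hW.exists_lie_lie_eq_smul_of_central hB hs hsc hs hsc
  obtain ⟨c', hc'⟩ := hW.exists_lie_lie_eq_smul_of_central hB hs hsc ht htc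
  have hc0 : c ≠ 0 := by
    rintro rfl
    obtain ⟨w, hw, hw0⟩ := Submodule.exists_mem_ne_zero_of_ne_bot hW.2.1
    exact hw0 (inj hw (inj (hW.1 s hs w hw) (by rw [hc w hw, zero_smul])))
  refine ⟨c' / c, fun w hw => sub_eq_zero.mp (inj (W.sub_mem (hW.1 t ht w hw)
    (W.smul_mem _ (hW.1 s hs w hw))) ?_)⟩
  rw [lie_sub, lie_smul, hc' w hw, hc w hw, smul_smul, div_mul_cancel₀ _ hc0, sub_self]

end AdIrreducible

section MSpace

variable {𝔤 : Type*} [LieRing 𝔤] [LieAlgebra ℝ 𝔤]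

/-- The Lie-algebraic data of an `M`-space `G/K₁` over a flag manifold `G/K = G/C(S)` with
`Ad(K)`-irreducible isotropy module `𝔪`. -/
structure IsMSpaceDecomposition (𝔨 𝔨₁ 𝔰 : LieSubalgebra ℝ 𝔤) (𝔪 : Submodule ℝ 𝔤) : Prop where
  lie_eq_zero : ∀ s ∈ 𝔰, ∀ k ∈ 𝔨, ⁅s, k⁆ = 0
  s_le : 𝔰 ≤ 𝔨
  k₁_le : 𝔨₁ ≤ 𝔨
  sup_eq : 𝔰.toSubmodule ⊔ 𝔨₁.toSubmodule = 𝔨.toSubmodule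
  isCompl : IsCompl 𝔨.toSubmodule 𝔪
  killingForm_eq_zero : ∀ x ∈ 𝔨, ∀ y ∈ 𝔪, killingForm ℝ 𝔤 x y = 0
  adIrreducible : AdIrreducible 𝔨 𝔪

/-- The operator `Λ` of a `G`-invariant Riemannian metric on `G/K₁` with tangent space `𝔫`,
`⟨x, y⟩ = B(Λ x, y)`. -/
structure IsMetricOperator (𝔨₁ : LieSubalgebra ℝ 𝔤) (𝔫 : Submodule ℝ 𝔤) (Λ : 𝔤 →ₗ[ℝ] 𝔤) :
    Prop where
  mapsTo : ∀ x ∈ 𝔫, Λ x ∈ 𝔫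
  symm : ∀ x ∈ 𝔫, ∀ y ∈ 𝔫, killingForm ℝ 𝔤 (Λ x) y = killingForm ℝ 𝔤 x (Λ y)
  pos : ∀ x ∈ 𝔫, x ≠ 0 → 0 < -(killingForm ℝ 𝔤 (Λ x) x)
  lie_eq : ∀ k ∈ 𝔨₁, ∀ x ∈ 𝔫, Λ ⁅k, x⁆ = ⁅k, Λ x⁆

lemma isGOMetric_of_eq_smul {k : LieSubalgebra ℝ 𝔤} {n : Submodule ℝ 𝔤} {Λ : 𝔤 →ₗ[ℝ] 𝔤}
    {c : ℝ} (hc : ∀ x ∈ n, Λ x = c • x) : IsGOMetric k n Λ := fun x hx =>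
  ⟨0, k.zero_mem, by rw [hc x hx, zero_add, lie_smul, lie_self, smul_zero]; exact zero_mem _⟩

lemma IsMetricOperator.pos_of_eq_smul [FiniteDimensional ℝ 𝔤]
    (hB : ∀ x : 𝔤, x ≠ 0 → killingForm ℝ 𝔤 x x < 0) {𝔨₁ : LieSubalgebra ℝ 𝔤}
    {𝔫 W : Submodule ℝ 𝔤} {Λ : 𝔤 →ₗ[ℝ] 𝔤} (hΛ : IsMetricOperator 𝔨₁ 𝔫 Λ) (hW𝔫 : W ≤ 𝔫)
    (hW : W ≠ ⊥) {μ : ℝ} (hμ : ∀ w ∈ W, Λ w = μ • w) : 0 < μ := by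
  obtain ⟨w, hw, hw0⟩ := Submodule.exists_mem_ne_zero_of_ne_bot hW
  have hpos := hΛ.pos w (hW𝔫 hw) hw0
  rw [hμ w hw, map_smul, LinearMap.smul_apply, smul_eq_mul] at hpos
  nlinarith [hB w hw0]

namespace IsMSpaceDecomposition

variable {𝔨 𝔨₁ 𝔰 : LieSubalgebra ℝ 𝔤} {𝔪 : Submodule ℝ 𝔤} {Λ : 𝔤 →ₗ[ℝ] 𝔤}

lemma lie_mem_of_mem_sup (h : IsMSpaceDecomposition 𝔨 𝔨₁ 𝔰 𝔪) {a v : 𝔤} (ha : a ∈ 𝔨)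
    (hv : v ∈ 𝔰.toSubmodule ⊔ 𝔪) : ⁅a, v⁆ ∈ 𝔪 := by
  obtain ⟨s, hs, m, hm, rfl⟩ := Submodule.mem_sup.mp hv
  rw [lie_add, ← lie_skew a s, h.lie_eq_zero s hs a ha, neg_zero, zero_add]
  exact h.adIrreducible.1 a ha m hm

lemma lt_of_adReducible (h : IsMSpaceDecomposition 𝔨 𝔨₁ 𝔰 𝔪) (hred : AdReducible 𝔨₁ 𝔪) :
    𝔨₁.toSubmodule < 𝔨.toSubmodule := by
  refine lt_of_le_of_ne (fun x hx => h.k₁_le hx) fun heq => ?_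
  obtain ⟨-, U, hU, hUinv, hU0, hUm⟩ := hred
  have hUinv' : AdInvariant 𝔨 U := fun k hk =>
    hUinv k (by rwa [← LieSubalgebra.mem_toSubmodule, heq])
  exact (h.adIrreducible.2.2 U hU hUinv').elim hU0 hUm

lemma exists_add_eq (h : IsMSpaceDecomposition 𝔨 𝔨₁ 𝔰 𝔪) {k : 𝔤} (hk : k ∈ 𝔨) :
    ∃ s ∈ 𝔰, ∃ b ∈ 𝔨₁, s + b = k :=
  Submodule.mem_sup.mp (by rw [h.sup_eq]; exact hk)

lemma killingForm_lie_map_self_eq_zero (h : IsMSpaceDecomposition 𝔨 𝔨₁ 𝔰 𝔪)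
    (hΛ : ∀ v ∈ 𝔰.toSubmodule ⊔ 𝔪, Λ v ∈ 𝔰.toSubmodule ⊔ 𝔪)
    (hGO : IsGOMetric 𝔨₁ (𝔰.toSubmodule ⊔ 𝔪) Λ) {z : 𝔤} (hz : z ∈ 𝔨)
    (hz₁ : ∀ b ∈ 𝔨₁, killingForm ℝ 𝔤 z b = 0) :
    ∀ v ∈ 𝔰.toSubmodule ⊔ 𝔪, killingForm ℝ 𝔤 z ⁅v, Λ v⁆ = 0 := by
  intro v hv
  obtain ⟨a, ha, hav⟩ := hGO v hv
  have hzav := hz₁ _ hav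
  rwa [add_lie, map_add,
    h.killingForm_eq_zero z hz _ (h.lie_mem_of_mem_sup (h.k₁_le ha) (hΛ v hv)), zero_add] at hzav

lemma lie_mem_of_isGOMetric (h : IsMSpaceDecomposition 𝔨 𝔨₁ 𝔰 𝔪)
    (hGO : IsGOMetric 𝔨₁ (𝔰.toSubmodule ⊔ 𝔪) Λ) (hΛ𝔰 : ∀ s ∈ 𝔰, Λ s ∈ 𝔰) {μ : ℝ}
    (hμ : ∀ m ∈ 𝔪, Λ m = μ • m) {U : Submodule ℝ 𝔤} (hU : U ≤ 𝔪) (hUinv : AdInvariant 𝔨₁ U)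
    {s u : 𝔤} (hs : s ∈ 𝔰) (hu : u ∈ U) : ⁅Λ s - μ • s, u⁆ ∈ U := by
  obtain ⟨a, ha, hav⟩ := hGO (s + u) (Submodule.add_mem_sup hs (hU hu))
  have hΛs := hΛ𝔰 s hs
  have has : ⁅a, Λ s⁆ = 0 := by rw [← lie_skew, h.lie_eq_zero _ hΛs a (h.k₁_le ha), neg_zero]
  have hss : ⁅s, Λ s⁆ = 0 := h.lie_eq_zero s hs _ (h.s_le hΛs)
  have hexp : ⁅a + (s + u), Λ (s + u)⁆ = μ • ⁅a, u⁆ - ⁅Λ s - μ • s, u⁆ := by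
    rw [map_add, hμ u (hU hu)]
    simp only [add_lie, lie_add, sub_lie, lie_smul, smul_lie, has, hss, lie_self]
    rw [← lie_skew u (Λ s)]
    module
  have h𝔪 : μ • ⁅a, u⁆ - ⁅Λ s - μ • s, u⁆ ∈ 𝔪 :=
    𝔪.sub_mem (𝔪.smul_mem _ (h.adIrreducible.1 a (h.k₁_le ha) u (hU hu)))
      (h.adIrreducible.1 _ (h.s_le (𝔰.sub_mem hΛs (𝔰.smul_mem μ hs))) u (hU hu))
  have hzero := Submodule.disjoint_def.mp h.isCompl.disjoint _ (hexp ▸ h.k₁_le hav) h𝔪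
  rw [← sub_eq_zero.mp hzero]
  exact U.smul_mem _ (hUinv a ha u hu)

variable [FiniteDimensional ℝ 𝔤]

lemma eq_zero_of_lie_eq_zero (hB : ∀ x : 𝔤, x ≠ 0 → killingForm ℝ 𝔤 x x < 0)
    (h : IsMSpaceDecomposition 𝔨 𝔨₁ 𝔰 𝔪) {s m : 𝔤} (hs : s ∈ 𝔰) (hs0 : s ≠ 0) (hm : m ∈ 𝔪)
    (hsm : ⁅s, m⁆ = 0) : m = 0 :=
  h.adIrreducible.eq_zero_of_lie_eq_zero_of_central hB h.isCompl.codisjoint.eq_top (h.s_le hs)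
    (h.lie_eq_zero s hs) hs0 hm hsm

lemma exists_lie_eq_smul_lie (hB : ∀ x : 𝔤, x ≠ 0 → killingForm ℝ 𝔤 x x < 0)
    (h : IsMSpaceDecomposition 𝔨 𝔨₁ 𝔰 𝔪) {s t : 𝔤} (hs : s ∈ 𝔰) (hs0 : s ≠ 0) (ht : t ∈ 𝔰) :
    ∃ r : ℝ, ∀ m ∈ 𝔪, ⁅t, m⁆ = r • ⁅s, m⁆ :=
  h.adIrreducible.exists_lie_eq_smul_lie_of_central hB h.isCompl.codisjoint.eq_top (h.s_le hs)
    (h.lie_eq_zero s hs) hs0 (h.s_le ht) (h.lie_eq_zero t ht)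

lemma exists_commute_of_isGOMetric (hB : ∀ x : 𝔤, x ≠ 0 → killingForm ℝ 𝔤 x x < 0)
    (h : IsMSpaceDecomposition 𝔨 𝔨₁ 𝔰 𝔪) (hΛ : IsMetricOperator 𝔨₁ (𝔰.toSubmodule ⊔ 𝔪) Λ)
    (hlt : 𝔨₁.toSubmodule < 𝔨.toSubmodule) (hGO : IsGOMetric 𝔨₁ (𝔰.toSubmodule ⊔ 𝔪) Λ) :
    ∃ s ∈ 𝔰, s ≠ 0 ∧ ∀ v ∈ 𝔰.toSubmodule ⊔ 𝔪, Λ ⁅s, v⁆ = ⁅s, Λ v⁆ := by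
  obtain ⟨z, hz, hz0, hz₁⟩ := exists_ne_zero_killingForm_eq_zero_of_lt hB hlt
  have hcomm := map_lie_eq_lie_map_of_killingForm_lie_map_self_eq_zero hB hΛ.mapsTo hΛ.symm
    (fun v hv => Submodule.mem_sup_right (h.lie_mem_of_mem_sup hz hv))
    (h.killingForm_lie_map_self_eq_zero hΛ.mapsTo hGO hz hz₁)
  obtain ⟨s, hs, b, hb, rfl⟩ := h.exists_add_eq hz
  refine ⟨s, hs, ?_, fun v hv => ?_⟩
  · rintro rfl
    rw [zero_add] at hz0 hz₁
    exact hz0 (eq_zero_of_killingForm_self_eq_zero hB (hz₁ b hb))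
  · have hsbv := hcomm v hv
    rwa [add_lie, add_lie, map_add, hΛ.lie_eq b hb v hv, add_left_inj] at hsbv

lemma map_mem_of_commute (hB : ∀ x : 𝔤, x ≠ 0 → killingForm ℝ 𝔤 x x < 0)
    (h : IsMSpaceDecomposition 𝔨 𝔨₁ 𝔰 𝔪)
    (hΛ : ∀ v ∈ 𝔰.toSubmodule ⊔ 𝔪, Λ v ∈ 𝔰.toSubmodule ⊔ 𝔪) {s₀ : 𝔤} (hs₀ : s₀ ∈ 𝔰)
    (hs₀0 : s₀ ≠ 0) (hcomm : ∀ v ∈ 𝔰.toSubmodule ⊔ 𝔪, Λ ⁅s₀, v⁆ = ⁅s₀, Λ v⁆) :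
    ∀ s ∈ 𝔰, Λ s ∈ 𝔰 := by
  intro s hs
  obtain ⟨s', hs', m, hm, hΛs⟩ := Submodule.mem_sup.mp (hΛ s (Submodule.mem_sup_left hs))
  have hs₀m : ⁅s₀, m⁆ = 0 := by
    have hs₀s := hcomm s (Submodule.mem_sup_left hs)
    rwa [h.lie_eq_zero s₀ hs₀ s (h.s_le hs), map_zero, ← hΛs, lie_add,
      h.lie_eq_zero s₀ hs₀ s' (h.s_le hs'), zero_add, eq_comm] at hs₀s
  rw [← hΛs, h.eq_zero_of_lie_eq_zero hB hs₀ hs₀0 hm hs₀m, add_zero]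
  exact hs'

lemma map_lie_eq_lie_map_of_commute (hB : ∀ x : 𝔤, x ≠ 0 → killingForm ℝ 𝔤 x x < 0)
    (h : IsMSpaceDecomposition 𝔨 𝔨₁ 𝔰 𝔪) (hΛ : IsMetricOperator 𝔨₁ (𝔰.toSubmodule ⊔ 𝔪) Λ)
    (hΛ𝔪 : ∀ m ∈ 𝔪, Λ m ∈ 𝔪) {s₀ : 𝔤} (hs₀ : s₀ ∈ 𝔰) (hs₀0 : s₀ ≠ 0)
    (hcomm : ∀ v ∈ 𝔰.toSubmodule ⊔ 𝔪, Λ ⁅s₀, v⁆ = ⁅s₀, Λ v⁆) :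
    ∀ k ∈ 𝔨, ∀ m ∈ 𝔪, Λ ⁅k, m⁆ = ⁅k, Λ m⁆ := by
  intro k hk m hm
  obtain ⟨t, ht, b, hb, rfl⟩ := h.exists_add_eq hk
  obtain ⟨r, hr⟩ := h.exists_lie_eq_smul_lie hB hs₀ hs₀0 ht
  rw [add_lie, add_lie, map_add, hΛ.lie_eq b hb m (Submodule.mem_sup_right hm), hr m hm,
    hr _ (hΛ𝔪 m hm), map_smul, hcomm m (Submodule.mem_sup_right hm)]

lemma adInvariant_of_lie_mem (hB : ∀ x : 𝔤, x ≠ 0 → killingForm ℝ 𝔤 x x < 0)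
    (h : IsMSpaceDecomposition 𝔨 𝔨₁ 𝔰 𝔪) {U : Submodule ℝ 𝔤} (hU : U ≤ 𝔪)
    (hUinv : AdInvariant 𝔨₁ U) {d : 𝔤} (hd : d ∈ 𝔰) (hd0 : d ≠ 0)
    (hdU : ∀ u ∈ U, ⁅d, u⁆ ∈ U) : AdInvariant 𝔨 U := by
  intro k hk u hu
  obtain ⟨t, ht, b, hb, rfl⟩ := h.exists_add_eq hk
  obtain ⟨r, hr⟩ := h.exists_lie_eq_smul_lie hB hd hd0 ht
  rw [add_lie, hr u (hU hu)]
  exact U.add_mem (U.smul_mem r (hdU u hu)) (hUinv b hb u hu)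

lemma map_eq_smul_of_isGOMetric (hB : ∀ x : 𝔤, x ≠ 0 → killingForm ℝ 𝔤 x x < 0)
    (h : IsMSpaceDecomposition 𝔨 𝔨₁ 𝔰 𝔪) (hred : AdReducible 𝔨₁ 𝔪)
    (hGO : IsGOMetric 𝔨₁ (𝔰.toSubmodule ⊔ 𝔪) Λ) (hΛ𝔰 : ∀ s ∈ 𝔰, Λ s ∈ 𝔰) {μ : ℝ}
    (hμ : ∀ m ∈ 𝔪, Λ m = μ • m) : ∀ s ∈ 𝔰, Λ s = μ • s := by
  intro s hs
  by_contra hne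
  obtain ⟨-, U, hU, hUinv, hU0, hUm⟩ := hred
  have hUinv' : AdInvariant 𝔨 U :=
    h.adInvariant_of_lie_mem hB hU hUinv (𝔰.sub_mem (hΛ𝔰 s hs) (𝔰.smul_mem μ hs))
      (sub_ne_zero.mpr hne) fun u hu => h.lie_mem_of_isGOMetric hGO hΛ𝔰 hμ hU hUinv hs hu
  exact (h.adIrreducible.2.2 U hU hUinv').elim hU0 hUm

end IsMSpaceDecomposition

end MSpace

theorem goMetric_iff_standard_of_isotropy_irreducible_general
    {𝔤 : Type*} [LieRing 𝔤] [LieAlgebra ℝ 𝔤] [FiniteDimensional ℝ 𝔤]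
    -- `G` is a compact simple Lie group: `𝔤` is simple with negative definite Killing form
    (hcompact : ∀ x : 𝔤, x ≠ 0 → killingForm ℝ 𝔤 x x < 0)
    (𝔨 𝔨₁ 𝔰 : LieSubalgebra ℝ 𝔤)
    -- `S` is a torus in `G` and `K = C(S)` is its centralizer
    (h𝔨cent : ∀ x : 𝔤, x ∈ 𝔨 ↔ ∀ s ∈ 𝔰, ⁅s, x⁆ = 0)
    -- `K = S × K₁`, `K₁` being the semisimple part of `K`
    (h𝔰𝔨 : 𝔰 ≤ 𝔨) (h𝔨₁𝔨 : 𝔨₁ ≤ 𝔨)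
    (h𝔨sum : 𝔰.toSubmodule ⊔ 𝔨₁.toSubmodule = 𝔨.toSubmodule)
    -- the `B`-orthogonal reductive decomposition `𝔤 = 𝔨 ⊕ 𝔪`, where `B = -Killing form`
    (𝔪 : Submodule ℝ 𝔤)
    (h𝔪compl : IsCompl 𝔨.toSubmodule 𝔪)
    (h𝔪orth : ∀ x ∈ 𝔨, ∀ y ∈ 𝔪, killingForm ℝ 𝔤 x y = 0)
    -- `𝔪` is irreducible as an `Ad(K)`-module (`s = 1` in the isotropy decomposition)
    (hmirr : AdIrreducible 𝔨 𝔪)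
    -- `𝔪` is reducible as an `Ad(K₁)`-module
    (hred : AdReducible 𝔨₁ 𝔪)
    -- `Λ` is the associated operator of the `G`-invariant metric `g` on the `M`-space
    -- `G/K₁`, whose tangent space at the origin is `𝔫 = 𝔰 ⊕ 𝔪`:
    -- positive definite, symmetric w.r.t. `B = -Killing`, and `Ad(K₁)`-equivariant
    (Λ : 𝔤 →ₗ[ℝ] 𝔤)
    (hΛ𝔫 : ∀ x ∈ 𝔰.toSubmodule ⊔ 𝔪, Λ x ∈ 𝔰.toSubmodule ⊔ 𝔪)
    (hΛsym : ∀ x ∈ 𝔰.toSubmodule ⊔ 𝔪, ∀ y ∈ 𝔰.toSubmodule ⊔ 𝔪,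
      killingForm ℝ 𝔤 (Λ x) y = killingForm ℝ 𝔤 x (Λ y))
    (hΛpos : ∀ x ∈ 𝔰.toSubmodule ⊔ 𝔪, x ≠ 0 → 0 < -(killingForm ℝ 𝔤 (Λ x) x))
    (hΛequiv : ∀ k ∈ 𝔨₁, ∀ x ∈ 𝔰.toSubmodule ⊔ 𝔪, Λ ⁅k, x⁆ = ⁅k, Λ x⁆)
    :
    IsGOMetric 𝔨₁ (𝔰.toSubmodule ⊔ 𝔪) Λ ↔
      ∃ c : ℝ, 0 < c ∧ ∀ x ∈ 𝔰.toSubmodule ⊔ 𝔪, Λ x = c • x := by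
  have h : IsMSpaceDecomposition 𝔨 𝔨₁ 𝔰 𝔪 :=
    ⟨fun s hs k hk => (h𝔨cent k).mp hk s hs, h𝔰𝔨, h𝔨₁𝔨, h𝔨sum, h𝔪compl, h𝔪orth, hmirr⟩
  have hΛ : IsMetricOperator 𝔨₁ (𝔰.toSubmodule ⊔ 𝔪) Λ := ⟨hΛ𝔫, hΛsym, hΛpos, hΛequiv⟩
  refine ⟨fun hGO => ?_, fun ⟨c, _, hc⟩ => isGOMetric_of_eq_smul hc⟩
  obtain ⟨s₀, hs₀, hs₀0, hcomm⟩ :=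
    h.exists_commute_of_isGOMetric hcompact hΛ (h.lt_of_adReducible hred) hGO
  have hΛ𝔰 := h.map_mem_of_commute hcompact hΛ𝔫 hs₀ hs₀0 hcomm
  have hΛ𝔪 := map_mem_of_map_mem_of_killingForm_eq_zero hcompact
    (fun s hs => h𝔪orth s (h𝔰𝔨 hs)) hΛ𝔫 hΛsym hΛ𝔰
  obtain ⟨μ, hμ⟩ := hmirr.exists_eq_smul hcompact hΛ𝔪
    (fun m hm m' hm' => hΛsym m (Submodule.mem_sup_right hm) m' (Submodule.mem_sup_right hm'))
    (h.map_lie_eq_lie_map_of_commute hcompact hΛ hΛ𝔪 hs₀ hs₀0 hcomm)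
  refine ⟨μ, hΛ.pos_of_eq_smul hcompact le_sup_right hmirr.2.1 hμ, fun x hx => ?_⟩
  obtain ⟨s, hs, m, hm, rfl⟩ := Submodule.mem_sup.mp hx
  rw [map_add, h.map_eq_smul_of_isGOMetric hcompact hred hGO hΛ𝔰 hμ s hs, hμ m hm, smul_add]

/-- **Theorem 3, part 2)** (Arvanitoyeorgos–Wang–Zhao).
Let `G/K` be a generalized flag manifold whose isotropy representation `𝔪` is irreducible
as an `Ad(K)`-module (`s = 1`), and let `G/K₁` be the corresponding `M`-space.  If `𝔪` is
reducible as an `Ad(K₁)`-module, then `(G/K₁, g)` is a g.o. space if and only if `g` is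
the standard metric (generated by `B(·,·)`, up to a positive scale). -/
theorem goMetric_iff_standard_of_isotropy_irreducible
    {𝔤 : Type*} [LieRing 𝔤] [LieAlgebra ℝ 𝔤] [FiniteDimensional ℝ 𝔤]
    -- `G` is a compact simple Lie group: `𝔤` is simple with negative definite Killing form
    [LieAlgebra.IsSimple ℝ 𝔤]
    (hcompact : ∀ x : 𝔤, x ≠ 0 → killingForm ℝ 𝔤 x x < 0)
    (𝔨 𝔨₁ 𝔰 : LieSubalgebra ℝ 𝔤)
    -- `S` is a torus in `G` and `K = C(S)` is its centralizer
    (h𝔰ab : ∀ x ∈ 𝔰, ∀ y ∈ 𝔰, ⁅x, y⁆ = (0 : 𝔤))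
    (h𝔨cent : ∀ x : 𝔤, x ∈ 𝔨 ↔ ∀ s ∈ 𝔰, ⁅s, x⁆ = 0)
    -- `K = S × K₁`, `K₁` being the semisimple part of `K`
    (h𝔰𝔨 : 𝔰 ≤ 𝔨) (h𝔨₁𝔨 : 𝔨₁ ≤ 𝔨)
    (h𝔨sum : 𝔰.toSubmodule ⊔ 𝔨₁.toSubmodule = 𝔨.toSubmodule)
    (h𝔨disj : Disjoint 𝔰.toSubmodule 𝔨₁.toSubmodule)
    (h𝔰𝔨₁ : ∀ s ∈ 𝔰, ∀ k ∈ 𝔨₁, ⁅s, k⁆ = (0 : 𝔤))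
    (hder : ∀ x ∈ 𝔨, ∀ y ∈ 𝔨, ⁅x, y⁆ ∈ 𝔨₁)
    -- the `B`-orthogonal reductive decomposition `𝔤 = 𝔨 ⊕ 𝔪`, where `B = -Killing form`
    (𝔪 : Submodule ℝ 𝔤)
    (h𝔪compl : IsCompl 𝔨.toSubmodule 𝔪)
    (h𝔪orth : ∀ x ∈ 𝔨, ∀ y ∈ 𝔪, killingForm ℝ 𝔤 x y = 0)
    (h𝔪inv : AdInvariant 𝔨 𝔪)
    -- `𝔪` is irreducible as an `Ad(K)`-module (`s = 1` in the isotropy decomposition)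
    (hmirr : AdIrreducible 𝔨 𝔪)
    -- `𝔪` is reducible as an `Ad(K₁)`-module
    (hred : AdReducible 𝔨₁ 𝔪)
    -- `Λ` is the associated operator of the `G`-invariant metric `g` on the `M`-space
    -- `G/K₁`, whose tangent space at the origin is `𝔫 = 𝔰 ⊕ 𝔪`:
    -- positive definite, symmetric w.r.t. `B = -Killing`, and `Ad(K₁)`-equivariant
    (Λ : 𝔤 →ₗ[ℝ] 𝔤)
    (hΛ𝔫 : ∀ x ∈ 𝔰.toSubmodule ⊔ 𝔪, Λ x ∈ 𝔰.toSubmodule ⊔ 𝔪)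
    (hΛsym : ∀ x ∈ 𝔰.toSubmodule ⊔ 𝔪, ∀ y ∈ 𝔰.toSubmodule ⊔ 𝔪,
      killingForm ℝ 𝔤 (Λ x) y = killingForm ℝ 𝔤 x (Λ y))
    (hΛpos : ∀ x ∈ 𝔰.toSubmodule ⊔ 𝔪, x ≠ 0 → 0 < -(killingForm ℝ 𝔤 (Λ x) x))
    (hΛequiv : ∀ k ∈ 𝔨₁, ∀ x ∈ 𝔰.toSubmodule ⊔ 𝔪, Λ ⁅k, x⁆ = ⁅k, Λ x⁆)
    :
    IsGOMetric 𝔨₁ (𝔰.toSubmodule ⊔ 𝔪) Λ ↔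
      ∃ c : ℝ, 0 < c ∧ ∀ x ∈ 𝔰.toSubmodule ⊔ 𝔪, Λ x = c • x :=
  goMetric_iff_standard_of_isotropy_irreducible_general hcompact 𝔨 𝔨₁ 𝔰 h𝔨cent h𝔰𝔨 h𝔨₁𝔨 h𝔨sum 𝔪
    h𝔪compl h𝔪orth hmirr hred Λ hΛ𝔫 hΛsym hΛpos hΛequiv
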